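/- Schwenk's coalescence lemma for the adjacency matrix: if rooted graphs G_1 (root v_1) and G_2 (root v_2) satisfy that G_1 and G_2 are A-cospectral and G_1 - v_1 and G_2 - v_2 are A-cospectral, then for any rooted graph H with root u, the graph obtained by identifying u with v_1 in H ∪ G_1 is A-cospectral with the graph obtained by identifying u with v_2 in H ∪ G_2. -/

import Mathlib

/-!
Expanding `det (X - A(H·G))` along the row of the merged root splits it as
`φ(H) φ(G - v) + φ(H - u) D(G, v)`, where `D(G, v)` is the characteristic determinant of `G`
with the diagonal entry at the root replaced by `0`. Taking for `H` a single vertex, for which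
`H·G ≅ G`, gives `D(G, v) = φ(G) - X φ(G - v)`, so `φ(H·G)` depends on `(G, v)` only through
`φ(G)` and `φ(G - v)`.
-/

open Matrix SimpleGraph Polynomial Classical

/-- The coalescence of a rooted graph `(H, u)` with a rooted graph `(G, v)`: the two roots
`u` and `v` are identified into a single vertex. -/
def coalesce {β α : Type*} (H : SimpleGraph β) (u : β) (G : SimpleGraph α) (v : α) :
    SimpleGraph (β ⊕ {a : α // a ≠ v}) where
  Adj x y :=
    match x, y with
    | Sum.inl a, Sum.inl b => H.Adj a b
    | Sum.inl a, Sum.inr b => a = u ∧ G.Adj v b.1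
    | Sum.inr a, Sum.inl b => b = u ∧ G.Adj v a.1
    | Sum.inr a, Sum.inr b => G.Adj a.1 b.1
  symm := by
    constructor
    rintro (a | a) (b | b) h
    · exact h.symm
    · exact ⟨h.1, h.2⟩
    · exact ⟨h.1, h.2⟩
    · exact h.symm
  loopless := by
    constructor
    rintro (a | a) h
    · exact H.irrefl h
    · exact G.irrefl h

/-- The graph obtained by deleting a vertex. -/
def delVert {α : Type*} (G : SimpleGraph α) (v : α) : SimpleGraph {a : α // a ≠ v} :=
  G.induce {a : α | a ≠ v}

section subtypeNeSumUnit

variable {α : Type*} [DecidableEq α]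

def Equiv.subtypeNeSumUnit (a : α) : {b // b ≠ a} ⊕ Unit ≃ α :=
  (optionEquivSumPUnit _).symm.trans (Equiv.optionSubtypeNe a)

@[simp] lemma Equiv.subtypeNeSumUnit_inl {a : α} (b : {b // b ≠ a}) :
    Equiv.subtypeNeSumUnit a (.inl b) = b := rfl

@[simp] lemma Equiv.subtypeNeSumUnit_inr (a : α) (x : Unit) :
    Equiv.subtypeNeSumUnit a (.inr x) = a := rfl

end subtypeNeSumUnit

namespace Matrix

variable {R ι κ : Type*} [CommRing R] [Fintype ι] [DecidableEq ι] [Fintype κ] [DecidableEq κ]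

lemma det_fromBlocks_vecMulVec_single (P : Matrix ι ι R) (Q : Matrix κ κ R) (i₀ : ι)
    (r s : κ → R) :
    (fromBlocks P (vecMulVec (Pi.single i₀ 1) r) (vecMulVec s (Pi.single i₀ 1)) Q).det =
      P.det * Q.det + (P.submatrix ((↑) : {i // i ≠ i₀} → ι) (↑)).det *
      (fromBlocks (0 : Matrix Unit Unit R) (replicateRow Unit r) (replicateCol Unit s) Q).det := by
  set M := fromBlocks P (vecMulVec (Pi.single i₀ 1) r) (vecMulVec s (Pi.single i₀ 1)) Q
  -- Split row `i₀` into its `ι`-part and its `κ`-part. Either summand has a zero off-diagonal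
  -- block: directly for the first, after moving `i₀` over to the `κ` side for the second.
  have hrow : M (.inl i₀) = Sum.elim (P i₀) (0 : κ → R) + Sum.elim (0 : ι → R) r := by
    ext (j | l) <;> simp [M, vecMulVec_apply]
  rw [← M.updateRow_eq_self (.inl i₀), hrow, det_updateRow_add]
  congr 1
  · have hM₁ : M.updateRow (.inl i₀) (Sum.elim (P i₀) (0 : κ → R)) =
        fromBlocks P 0 (vecMulVec s (Pi.single i₀ 1)) Q := by
      ext (i | k) (j | l) <;>
        simp +contextual [M, updateRow_apply, vecMulVec_apply, Pi.single_apply]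
    rw [hM₁, det_fromBlocks_zero₁₂]
  · let e : ι ⊕ κ ≃ {i // i ≠ i₀} ⊕ (Unit ⊕ κ) :=
      ((Equiv.subtypeNeSumUnit i₀).symm.sumCongr (Equiv.refl κ)).trans (Equiv.sumAssoc _ _ _)
    have hM₂ : reindex e e (M.updateRow (.inl i₀) (Sum.elim (0 : ι → R) r)) =
        fromBlocks (P.submatrix ((↑) : {i // i ≠ i₀} → ι) (↑))
          (fromCols (replicateCol Unit fun i => P i i₀) 0) 0
          (fromBlocks 0 (replicateRow Unit r) (replicateCol Unit s) Q) := by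
      ext (i | _ | k) (j | _ | l) <;>
        simp [e, M, updateRow_apply, vecMulVec_apply, fun x : {i // i ≠ i₀} => x.2]
    rw [← det_reindex_self e, hM₂, det_fromBlocks_zero₂₁]

end Matrix

section coalesce

variable {α β : Type*} (H : SimpleGraph β) (u : β) (G : SimpleGraph α) (v : α)

@[simp] lemma coalesce_adj_inl_inl (a b : β) :
    (coalesce H u G v).Adj (.inl a) (.inl b) ↔ H.Adj a b := Iff.rfl

@[simp] lemma coalesce_adj_inl_inr (a : β) (b : {a // a ≠ v}) :
    (coalesce H u G v).Adj (.inl a) (.inr b) ↔ a = u ∧ G.Adj v b := Iff.rfl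

@[simp] lemma coalesce_adj_inr_inl (a : {a // a ≠ v}) (b : β) :
    (coalesce H u G v).Adj (.inr a) (.inl b) ↔ b = u ∧ G.Adj v a := Iff.rfl

@[simp] lemma coalesce_adj_inr_inr (a b : {a // a ≠ v}) :
    (coalesce H u G v).Adj (.inr a) (.inr b) ↔ G.Adj a b := Iff.rfl

@[simp] lemma delVert_adj (a b : {a // a ≠ v}) : (delVert G v).Adj a b ↔ G.Adj a b := Iff.rfl

noncomputable def coalesceBotIso : coalesce (⊥ : SimpleGraph Unit) () G v ≃g G where
  toEquiv := (Equiv.sumComm _ _).trans (Equiv.subtypeNeSumUnit v)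
  map_rel_iff' := by
    rintro (_ | a) (_ | b) <;> simp [G.adj_comm v]

variable {R : Type*} [CommRing R] [Fintype α] [Fintype β]

noncomputable def rootBorder : {a // a ≠ v} → R[X] := fun a => -C (G.adjMatrix R v a)

lemma charmatrix_adjMatrix_coalesce :
    charmatrix ((coalesce H u G v).adjMatrix R) =
      fromBlocks (charmatrix (H.adjMatrix R)) (vecMulVec (Pi.single u 1) (rootBorder G v))
        (vecMulVec (rootBorder G v) (Pi.single u 1)) (charmatrix ((delVert G v).adjMatrix R)) := by
  ext (a | a) (b | b) : 1 <;>
    simp [charmatrix_apply, adjMatrix_apply, diagonal_apply, rootBorder, vecMulVec_apply,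
      Pi.single_apply, ite_and, apply_ite C] <;>
    split_ifs <;> simp

lemma submatrix_charmatrix_adjMatrix :
    (charmatrix (G.adjMatrix R)).submatrix ((↑) : {a // a ≠ v} → α) (↑) =
      charmatrix ((delVert G v).adjMatrix R) := by
  ext a b : 1
  simp [charmatrix_apply, adjMatrix_apply, diagonal_apply, Subtype.ext_iff]

noncomputable def rootBorderDet : R[X] :=
  (fromBlocks 0 (replicateRow Unit (rootBorder G v)) (replicateCol Unit (rootBorder G v))
    (charmatrix ((delVert G v).adjMatrix R))).det

lemma charpoly_coalesce_eq_rootBorderDet :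
    ((coalesce H u G v).adjMatrix R).charpoly =
      (H.adjMatrix R).charpoly * ((delVert G v).adjMatrix R).charpoly +
        ((delVert H u).adjMatrix R).charpoly * rootBorderDet G v := by
  rw [charpoly, charmatrix_adjMatrix_coalesce, det_fromBlocks_vecMulVec_single,
    submatrix_charmatrix_adjMatrix, rootBorderDet]
  rfl

lemma charpoly_eq_X_mul_add_rootBorderDet :
    (G.adjMatrix R).charpoly = X * ((delVert G v).adjMatrix R).charpoly + rootBorderDet G v := by
  have : IsEmpty {a : Unit // a ≠ ()} := ⟨fun a => a.2 rfl⟩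
  rw [← Iso.reindex_adjMatrix R (coalesceBotIso G v), charpoly_reindex]
  -- `convert`, since the `Fintype {a : Unit // a ≠ ()}` instance built from `DecidableEq Unit`
  -- differs from the classical one in the instantiated lemma.
  convert charpoly_coalesce_eq_rootBorderDet ⊥ () G v using 2
  · simp [charpoly, det_unique]
  · simp [charpoly_isEmpty]

theorem charpoly_coalesce :
    ((coalesce H u G v).adjMatrix R).charpoly =
      (H.adjMatrix R).charpoly * ((delVert G v).adjMatrix R).charpoly +
        ((delVert H u).adjMatrix R).charpoly *
          ((G.adjMatrix R).charpoly - X * ((delVert G v).adjMatrix R).charpoly) := by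
  rw [charpoly_coalesce_eq_rootBorderDet, charpoly_eq_X_mul_add_rootBorderDet G v]
  ring

end coalesce

/-- Schwenk's coalescence lemma for the adjacency matrix: if `G₁` and `G₂` are
`A`-cospectral rooted graphs whose root-deleted graphs are also `A`-cospectral, then
coalescing any rooted graph `H` with `G₁` gives a graph `A`-cospectral with the
coalescence of `H` with `G₂`. -/
theorem schwenk_coalescence
    {α₁ α₂ β : Type*} [Fintype α₁] [Fintype α₂] [Fintype β]
    (G₁ : SimpleGraph α₁) (v₁ : α₁) (G₂ : SimpleGraph α₂) (v₂ : α₂)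
    (hco : (G₁.adjMatrix ℝ).charpoly = (G₂.adjMatrix ℝ).charpoly)
    (hco' : ((delVert G₁ v₁).adjMatrix ℝ).charpoly = ((delVert G₂ v₂).adjMatrix ℝ).charpoly)
    (H : SimpleGraph β) (u : β) :
    ((coalesce H u G₁ v₁).adjMatrix ℝ).charpoly =
      ((coalesce H u G₂ v₂).adjMatrix ℝ).charpoly := by
  rw [charpoly_coalesce, charpoly_coalesce, hco, hco']
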